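/- (Projection Slice Theorem.) Let f be a Schwartz function on ℝ² and s ∈ ℝ. Define the Radon transform Rf(u,s) = ∫_ℝ f(u − s x₂, x₂) dx₂. Then for every ω ∈ ℝ, the one-dimensional Fourier transform of u ↦ Rf(u,s) evaluated at ω equals f̂(ω, sω), i.e. ∫_ℝ Rf(u,s) e^{−2πi uω} du = f̂(ω·(1,s)). -/

import Mathlib

open MeasureTheory Real Set

/-- The Fourier transform on `ℝ²` with convention `f̂(ω) = ∫ f(x) e^{−2πi x·ω} dx`. -/
noncomputable def FT2 (f : ℝ × ℝ → ℂ) (ω : ℝ × ℝ) : ℂ :=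
  ∫ x : ℝ × ℝ, f x * Complex.exp (-(2 * Real.pi * (x.1 * ω.1 + x.2 * ω.2)) * Complex.I)

/-- The Radon transform (parametrized by slope): `Rf(u,s) = ∫ f(u − s x₂, x₂) dx₂`. -/
noncomputable def RadonT (f : ℝ × ℝ → ℂ) (u s : ℝ) : ℂ :=
  ∫ x2 : ℝ, f (u - s * x2, x2)

/-!
The shear `(u, x₂) ↦ (u - s x₂, x₂)` preserves Lebesgue measure on `ℝ²`, so by Fubini the
iterated integral `∫ u, ∫ x₂, f (u - s x₂, x₂) e^{-2πi u ω}` is the integral over `ℝ²` of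
`f (x₁, x₂) e^{-2πi u ω}` with `u = x₁ + s x₂`, and `u ω = x₁ ω + x₂ (s ω)` is exactly the phase
of `f̂` at `(ω, s ω)`.
-/

open Measure

section Shear

variable {G β : Type*} [AddGroup G] [MeasurableSpace G] [MeasurableAdd G] [MeasurableSub₂ G]
  [MeasurableSpace β] (μ : Measure G) (ν : Measure β) [IsAddRightInvariant μ] [SFinite μ]
  [SFinite ν] {φ : β → G}

theorem measurePreserving_fst_sub_comp_snd (hφ : Measurable φ) :
    MeasurePreserving (fun p : G × β => (p.1 - φ p.2, p.2)) (μ.prod ν) (μ.prod ν) :=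
  (measurePreserving_swap.comp <| (MeasurePreserving.id ν).skew_product
    (g := fun b a => a - φ b) (by fun_prop)
    (ae_of_all _ fun b => (measurePreserving_sub_right μ (φ b)).map_eq)).comp
    measurePreserving_swap

theorem integral_integral_sub_eq_integral_prod {E : Type*} [NormedAddCommGroup E]
    [NormedSpace ℝ E] (hφ : Measurable φ) {g : G × β → E} (hg : Integrable g (μ.prod ν)) :
    ∫ a, ∫ b, g (a - φ b, b) ∂ν ∂μ = ∫ p, g p ∂(μ.prod ν) := by
  have hT := measurePreserving_fst_sub_comp_snd μ ν hφ
  rw [integral_integral (f := fun a b => g (a - φ b, b)) (hT.integrable_comp_of_integrable hg),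
    ← integral_map hT.aemeasurable (by rw [hT.map_eq]; exact hg.1), hT.map_eq]

end Shear

theorem MeasureTheory.Integrable.mul_cexp_ofReal_mul_I {α : Type*} [MeasurableSpace α]
    {μ : Measure α} {f : α → ℂ} (hf : Integrable f μ) {θ : α → ℝ}
    (hθ : AEStronglyMeasurable θ μ) :
    Integrable (fun x => f x * Complex.exp (θ x * Complex.I)) μ :=
  hf.mul_bdd (c := 1) (by fun_prop) (ae_of_all _ fun x => (Complex.norm_exp_ofReal_mul_I _).le)

/-- **Projection Slice Theorem.** For a Schwartz function `f` on `ℝ²`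
and `s ∈ ℝ`, the one-dimensional Fourier transform of `u ↦ Rf(u,s)` at `ω` equals
`f̂(ω, sω)`, i.e. `∫ Rf(u,s) e^{−2πiuω} du = f̂(ω·(1,s))`. -/
theorem stmt5 (f : SchwartzMap (ℝ × ℝ) ℂ) (s : ℝ) (ω : ℝ) :
    (∫ u : ℝ, RadonT (fun x => f x) u s * Complex.exp (-(2 * Real.pi * (u * ω)) * Complex.I))
      = FT2 (fun x => f x) (ω * 1, ω * s) := by
  set g : ℝ × ℝ → ℂ := fun x =>
    f x * Complex.exp (↑(-(2 * π * (x.1 * ω + x.2 * (ω * s)))) * Complex.I)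
  have hg : Integrable g := f.integrable.mul_cexp_ofReal_mul_I (by fun_prop)
  have phase (u x₂ : ℝ) : (u - s * x₂) * ω + x₂ * (ω * s) = u * ω := by ring
  calc
    _ = ∫ u, ∫ x₂, g (u - s * x₂, x₂) := by
      congr 1 with u
      rw [RadonT, ← integral_mul_const]
      simp only [g, phase]
      push_cast
      rfl
    _ = ∫ p, g p := by
      rw [Measure.volume_eq_prod] at hg ⊢
      exact integral_integral_sub_eq_integral_prod _ _ (measurable_const.mul measurable_id) hg
    _ = _ := by
      simp only [FT2, g, mul_one]
      push_cast
      rfl
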